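/- arXiv:1109.2296 — 2 statements merged into one kernel-verified Lean document; each statement's English description precedes it below -/
import Mathlib

section
/- Consider the line graph setup with n nodes, each edge sample bounded in [−1,1] almost surely, and suppose every edge is sampled the same number of times T. Fix ε > 0 and δ ∈ (0,1) and set ε̃ = max(ε, u). If T ≥ (4n/ε̃²)·log(2/δ), then the node k maximizing the empirical prefix sums Ŝ_1, …, Ŝ_n satisfies r_k ≥ r* − ε with probability at least 1 − δ; consequently the total number of edge pulls is at most (n−1)·T ≤ (4n²/ε̃²)·log(2/δ). -/
/-!
Let `i⋆` be an optimal node and `G = max ε u`. For every node `j`,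
`T * ((Ŝ_j - Ŝ_{i⋆}) - (r_j - r_{i⋆}))` is a sum of centred samples over the edges between `i⋆`
and `j`; these samples are independent and, by Hoeffding's lemma, `1`-sub-Gaussian. As `j`
moves away from `i⋆` to the right (resp. to the left), these sums are the partial sums along a
growing chain of finsets, and `exp (t * partial sum)` is a submartingale. Doob's maximal
inequality then bounds the probability that some `j` on either side has deviation at least `G`
by `exp (-(G T)² / (2 (n + 1) T)) ≤ δ / 2`; a union bound over the nodes instead would lose a
factor `n`. Off these two events, the empirical maximiser `k` satisfies `r⋆ - r_k < G`, and
since every suboptimal node lies at least `u` below `r⋆`, this forces `r_k ≥ r⋆ - ε`.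
-/

open MeasureTheory ProbabilityTheory Finset Real
open scoped NNReal ENNReal

lemma sub_le_of_sub_lt_max {a b ε u : ℝ} (hε : 0 ≤ ε) (hu : b < a → u ≤ a - b)
    (h : a - b < max ε u) : a - ε ≤ b := by
  rcases lt_max_iff.mp h with h | h
  · linarith
  · by_contra! hb
    linarith [hu (by linarith)]

lemma natCast_mul_le_of_le_mul {n : ℕ} {T' G L : ℝ} (hL : 0 ≤ L)
    (hT' : T' ≤ 4 * (n + 1) / G ^ 2 * L) : (n : ℝ) * T' ≤ 4 * (n + 1) ^ 2 / G ^ 2 * L :=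
  calc (n : ℝ) * T' ≤ (n + 1) * (4 * (n + 1) / G ^ 2 * L) := by
        have : 0 ≤ 4 * (n + 1) / G ^ 2 * L := by positivity
        nlinarith [mul_le_mul_of_nonneg_left hT' (Nat.cast_nonneg (α := ℝ) n)]
    _ = 4 * (n + 1) ^ 2 / G ^ 2 * L := by ring

namespace ProbabilityTheory

variable {Ω ι : Type*} {mΩ : MeasurableSpace Ω} {μ : Measure Ω}

lemma one_le_mgf_of_integral_eq_zero [IsProbabilityMeasure μ] {X : Ω → ℝ} {t : ℝ}
    (hX : Integrable X μ) (h_mean : μ[X] = 0)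
    (h_exp : Integrable (fun ω ↦ exp (t * X ω)) μ) : 1 ≤ mgf X μ t :=
  calc 1 = ∫ ω, (1 + t * X ω) ∂μ := by
        rw [integral_add (integrable_const 1) (hX.const_mul t), integral_const_mul, h_mean]
        simp
    _ ≤ mgf X μ t :=
        integral_mono ((integrable_const 1).add (hX.const_mul t)) h_exp
          fun ω ↦ by linarith [add_one_le_exp (t * X ω)]

variable {Y : ι → Ω → ℝ}

lemma measurable_sum_biSup_comap (u : Finset ι) :
    Measurable[⨆ i ∈ u, MeasurableSpace.comap (Y i) inferInstance]
      (fun ω ↦ ∑ i ∈ u, Y i ω) :=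
  Finset.measurable_sum u fun i hi ↦ (comap_measurable (Y i)).mono
    (le_iSup₂ (f := fun i (_ : i ∈ u) ↦ MeasurableSpace.comap (Y i) inferInstance) i hi) le_rfl

def chainFiltration (Y : ι → Ω → ℝ) (hY : ∀ i, Measurable (Y i)) (s : ℕ → Finset ι)
    (hs : Monotone s) : Filtration ℕ mΩ where
  seq m := ⨆ i ∈ s m, MeasurableSpace.comap (Y i) inferInstance
  mono' _ _ h := biSup_mono fun _ hi ↦ hs h hi
  le' _ := iSup₂_le fun i _ ↦ (hY i).comap_le

variable [DecidableEq ι] {s : ℕ → Finset ι}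

section

variable {hY : ∀ i, Measurable (Y i)} {hs : Monotone s}

lemma indep_chainFiltration_sdiff (h_indep : iIndepFun Y μ) (m : ℕ) :
    Indep (chainFiltration Y hY s hs m)
      (⨆ i ∈ s (m + 1) \ s m, MeasurableSpace.comap (Y i) inferInstance) μ :=
  indep_iSup_of_disjoint (fun i ↦ (hY i).comap_le) ((iIndepFun_iff_iIndep _ _ _).mp h_indep)
    (S := (s m : Set ι)) (T := ((s (m + 1) \ s m : Finset ι) : Set ι))
    (by rw [Finset.disjoint_coe]; exact disjoint_sdiff)

lemma submartingale_exp_mul_sum_chain [IsProbabilityMeasure μ] {c : ℝ≥0}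
    (h_indep : iIndepFun Y μ) (h_mean : ∀ i, μ[Y i] = 0)
    (h_subG : ∀ i, HasSubgaussianMGF (Y i) c μ) (t : ℝ) :
    Submartingale (fun m ω ↦ exp (t * ∑ i ∈ s m, Y i ω)) (chainFiltration Y hY s hs) μ := by
  have h_exp (u : Finset ι) : Integrable (fun ω ↦ exp (t * ∑ i ∈ u, Y i ω)) μ :=
    (HasSubgaussianMGF.sum_of_iIndepFun h_indep fun i _ ↦ h_subG i).integrable_exp_mul t
  have h_adapted (m : ℕ) : Measurable[chainFiltration Y hY s hs m]
      (fun ω ↦ exp (t * ∑ i ∈ s m, Y i ω)) :=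
    ((measurable_sum_biSup_comap (s m)).const_mul t).exp
  refine submartingale_of_setIntegral_le_succ (fun m ↦ (h_adapted m).stronglyMeasurable)
    (fun m ↦ h_exp _) fun m A hA ↦ ?_
  set D := fun ω ↦ ∑ i ∈ s (m + 1) \ s m, Y i ω
  have h_split : (fun ω ↦ A.indicator (fun ω ↦ exp (t * ∑ i ∈ s (m + 1), Y i ω)) ω)
      = A.indicator (fun ω ↦ exp (t * ∑ i ∈ s m, Y i ω)) * fun ω ↦ exp (t * D ω) := by
    ext ω
    by_cases hω : ω ∈ A
    · rw [Set.indicator_of_mem hω, Pi.mul_apply, Set.indicator_of_mem hω, ← exp_add,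
        ← Finset.sum_sdiff (hs m.le_succ), mul_add, add_comm]
    · simp [Set.indicator_of_notMem hω]
  have h_indepFun : IndepFun (A.indicator (fun ω ↦ exp (t * ∑ i ∈ s m, Y i ω)))
      (fun ω ↦ exp (t * D ω)) μ := by
    rw [IndepFun_iff_Indep]
    refine indep_of_indep_of_le_right (indep_of_indep_of_le_left
      (indep_chainFiltration_sdiff h_indep m) ((h_adapted m).indicator hA).comap_le) ?_
    exact ((measurable_sum_biSup_comap _).const_mul t).exp.comap_le
  have h_mean_D : μ[D] = 0 := by
    simp only [D]
    rw [integral_finsetSum _ fun i _ ↦ (h_subG i).integrable]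
    simp [h_mean]
  have hA' : MeasurableSet A := chainFiltration Y hY s hs |>.le m A hA
  calc ∫ ω in A, exp (t * ∑ i ∈ s m, Y i ω) ∂μ
      ≤ (∫ ω in A, exp (t * ∑ i ∈ s m, Y i ω) ∂μ) * mgf D μ t :=
        le_mul_of_one_le_right (setIntegral_nonneg hA' fun _ _ ↦ (exp_pos _).le)
          (one_le_mgf_of_integral_eq_zero
            (integrable_finsetSum _ fun i _ ↦ (h_subG i).integrable) h_mean_D (h_exp _))
    _ = ∫ ω in A, exp (t * ∑ i ∈ s (m + 1), Y i ω) ∂μ := by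
        rw [← integral_indicator hA', ← integral_indicator hA', h_split,
          h_indepFun.integral_mul_eq_mul_integral
            (((h_exp _).indicator hA').aestronglyMeasurable) (h_exp _).aestronglyMeasurable]
        rfl

end

variable [IsProbabilityMeasure μ] {c : ℝ≥0}

theorem measureReal_exists_le_sum_chain_le_exp_add (hY : ∀ i, Measurable (Y i))
    (hs : Monotone s) (h_indep : iIndepFun Y μ) (h_mean : ∀ i, μ[Y i] = 0)
    (h_subG : ∀ i, HasSubgaussianMGF (Y i) c μ) (M : ℕ) (a : ℝ) {t : ℝ} (ht : 0 ≤ t) :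
    μ.real {ω | ∃ m ≤ M, a ≤ ∑ i ∈ s m, Y i ω} ≤ exp (-t * a + c * #(s M) * t ^ 2 / 2) := by
  set f := fun m ω ↦ exp (t * ∑ i ∈ s m, Y i ω)
  set ε : ℝ≥0 := ⟨exp (t * a), (exp_pos _).le⟩
  set B := {ω | (ε : ℝ) ≤ (range (M + 1)).sup' nonempty_range_add_one fun k ↦ f k ω}
  have h_sub : {ω | ∃ m ≤ M, a ≤ ∑ i ∈ s m, Y i ω} ⊆ B := by
    rintro ω ⟨m, hm, ha⟩
    exact (exp_le_exp.mpr (mul_le_mul_of_nonneg_left ha ht)).trans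
      (le_sup' (fun k ↦ f k ω) (mem_range.mpr (Nat.lt_succ_of_le hm)))
  have h_sum := HasSubgaussianMGF.sum_of_iIndepFun h_indep (s := s M) fun i _ ↦ h_subG i
  have h_doob := maximal_ineq (submartingale_exp_mul_sum_chain (hY := hY) (hs := hs)
    h_indep h_mean h_subG t) (fun m ω ↦ (exp_pos _).le) (ε := ε) M
  have h_int : ∫ ω in B, f M ω ∂μ ≤ exp (c * #(s M) * t ^ 2 / 2) :=
    calc ∫ ω in B, f M ω ∂μ ≤ mgf (fun ω ↦ ∑ i ∈ s M, Y i ω) μ t :=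
          setIntegral_le_integral (h_sum.integrable_exp_mul t)
            (ae_of_all _ fun _ ↦ (exp_pos _).le)
      _ ≤ exp (c * #(s M) * t ^ 2 / 2) := by
          simpa [mul_comm] using h_sum.mgf_le t
  have h_real : exp (t * a) * μ.real B ≤ exp (c * #(s M) * t ^ 2 / 2) := by
    have := ENNReal.toReal_mono ENNReal.ofReal_ne_top h_doob
    rw [ENNReal.toReal_mul, ENNReal.toReal_ofReal (integral_nonneg fun _ ↦ (exp_pos _).le)]
      at this
    exact this.trans h_int
  calc μ.real {ω | ∃ m ≤ M, a ≤ ∑ i ∈ s m, Y i ω} ≤ μ.real B := measureReal_mono h_sub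
    _ ≤ exp (-t * a + c * #(s M) * t ^ 2 / 2) := by
        rw [neg_mul, neg_add_eq_sub, exp_sub, le_div_iff₀ (exp_pos _), mul_comm]
        exact h_real

theorem measureReal_exists_le_sum_chain_le (hY : ∀ i, Measurable (Y i)) (hs : Monotone s)
    (h_indep : iIndepFun Y μ) (h_mean : ∀ i, μ[Y i] = 0)
    (h_subG : ∀ i, HasSubgaussianMGF (Y i) c μ) (M : ℕ) {N : ℕ} (hN : #(s M) ≤ N) {a : ℝ}
    (ha : 0 ≤ a) :
    μ.real {ω | ∃ m ≤ M, a ≤ ∑ i ∈ s m, Y i ω} ≤ exp (-a ^ 2 / (2 * N * c)) := by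
  rcases (by positivity : (0 : ℝ) ≤ N * c).eq_or_lt with h0 | hpos
  · rw [mul_assoc, ← h0, mul_zero, div_zero, exp_zero]
    exact measureReal_le_one
  refine (measureReal_exists_le_sum_chain_le_exp_add hY hs h_indep h_mean h_subG M a
    (t := a / (N * c)) (by positivity)).trans (exp_le_exp.mpr ?_)
  have hcard : (c : ℝ) * #(s M) ≤ N * c := by rw [mul_comm]; gcongr
  calc -(a / (N * c)) * a + c * #(s M) * (a / (N * c)) ^ 2 / 2
      ≤ -(a / (N * c)) * a + N * c * (a / (N * c)) ^ 2 / 2 := by gcongr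
    _ = -a ^ 2 / (2 * N * c) := by field_simp; ring

theorem measureReal_exists_le_sum_chain_le_half [Fintype ι] (hY : ∀ i, Measurable (Y i))
    (hs : Monotone s) (h_indep : iIndepFun Y μ)
    (h_mean : ∀ i, μ[Y i] = 0) (h_subG : ∀ i, HasSubgaussianMGF (Y i) 1 μ) {n T : ℕ}
    (hcard : Fintype.card ι ≤ (n + 1) * T) (hT : 0 < T) {G δ : ℝ} (hG : 0 < G) (hδ : 0 < δ)
    (hδ1 : δ < 1) (hsample : (T : ℝ) ≥ (4 * (n + 1) / G ^ 2) * log (2 / δ)) :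
    μ.real {ω | ∃ m ≤ n, G * T ≤ ∑ i ∈ s m, Y i ω} ≤ δ / 2 := by
  have hT' : (0 : ℝ) < T := by exact_mod_cast hT
  refine (measureReal_exists_le_sum_chain_le hY hs h_indep h_mean h_subG n
    ((card_le_univ _).trans hcard) (by positivity)).trans ?_
  have hL : 0 ≤ log (2 / δ) := log_nonneg (by rw [le_div_iff₀ hδ]; linarith)
  have h_log : log (δ / 2) = -log (2 / δ) := by rw [← log_inv, inv_div]
  rw [ge_iff_le, div_mul_eq_mul_div, div_le_iff₀ (by positivity)] at hsample
  rw [← exp_log (by positivity : 0 < δ / 2), exp_le_exp, h_log, neg_div, neg_le_neg_iff,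
    le_div_iff₀ (by positivity)]
  push_cast
  nlinarith

lemma one_sub_ofReal_le_measure {A B C : Set Ω} {δ : ℝ}
    (hA : μ.real A ≤ δ / 2) (hB : μ.real B ≤ δ / 2) (hC : Cᶜ ⊆ A ∪ B) :
    1 - ENNReal.ofReal δ ≤ μ C := by
  have h_bad : μ Cᶜ ≤ ENNReal.ofReal δ := by
    rw [← ofReal_measureReal]
    exact ENNReal.ofReal_le_ofReal
      ((measureReal_mono hC).trans ((measureReal_union_le A B).trans (by linarith)))
  refine tsub_le_iff_right.mpr ?_
  calc 1 = μ (C ∪ Cᶜ) := by rw [Set.union_compl_self, measure_univ]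
    _ ≤ μ C + μ Cᶜ := measure_union_le C Cᶜ
    _ ≤ μ C + ENNReal.ofReal δ := by gcongr

end ProbabilityTheory

section LineGraph

variable {Ω : Type*} {mΩ : MeasurableSpace Ω} {n T : ℕ}

def edgesBelow (n j : ℕ) : Finset (Fin n) := univ.filter fun i ↦ (i : ℕ) < j

lemma edgesBelow_mono : Monotone (edgesBelow n) :=
  fun _ _ h _ ↦ by simp only [edgesBelow, mem_filter, mem_univ, true_and]; omega

lemma sum_edgesBelow_sub (r : Fin (n + 1) → ℝ) (j : Fin (n + 1)) :
    ∑ i ∈ edgesBelow n j, (r i.succ - r i.castSucc) = r j - r 0 := by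
  induction j using Fin.induction with
  | zero => simp [edgesBelow]
  | succ i ih =>
    have h_insert : edgesBelow n i.succ = insert i (edgesBelow n i.castSucc) := by
      ext x; simp [edgesBelow, Fin.ext_iff]; omega
    rw [h_insert, sum_insert (by simp [edgesBelow]), ih]
    ring

def samplesBelow (n T j : ℕ) : Finset (Fin n × Fin T) := edgesBelow n j ×ˢ univ

lemma samplesBelow_mono : Monotone (samplesBelow n T) :=
  fun _ _ h ↦ product_subset_product_left (edgesBelow_mono h)

noncomputable def empiricalPrefixSum (X : Fin n → Fin T → Ω → ℝ) (j : Fin (n + 1)) (ω : Ω) : ℝ :=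
  ∑ i ∈ edgesBelow n j, (1 / (T : ℝ)) * ∑ t : Fin T, X i t ω

def edgeNoise (r : Fin (n + 1) → ℝ) (X : Fin n → Fin T → Ω → ℝ) (p : Fin n × Fin T)
    (ω : Ω) : ℝ :=
  X p.1 p.2 ω - (r p.1.succ - r p.1.castSucc)

variable {r : Fin (n + 1) → ℝ} {X : Fin n → Fin T → Ω → ℝ}

lemma mul_empiricalPrefixSum_sub (hT : 0 < T) (j : Fin (n + 1)) (ω : Ω) :
    T * (empiricalPrefixSum X j ω - (r j - r 0))
      = ∑ p ∈ samplesBelow n T j, edgeNoise r X p ω := by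
  rw [samplesBelow, sum_product, ← sum_edgesBelow_sub r j, empiricalPrefixSum, ← mul_sum]
  simp only [edgeNoise, sum_sub_distrib, sum_const, card_univ, Fintype.card_fin, nsmul_eq_mul,
    ← mul_sum]
  field_simp

lemma empiricalPrefixSum_sub_lt (hT : 0 < T) {i : Fin (n + 1)} {ω : Ω} {G : ℝ}
    (hR : ∀ m ≤ n, ∑ p ∈ samplesBelow n T (i + m) \ samplesBelow n T i, edgeNoise r X p ω < G * T)
    (hL : ∀ m ≤ n, ∑ p ∈ samplesBelow n T i \ samplesBelow n T (i - m), -edgeNoise r X p ω < G * T)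
    (j : Fin (n + 1)) :
    (empiricalPrefixSum X j ω - empiricalPrefixSum X i ω) - (r j - r i) < G := by
  suffices h : ∑ p ∈ samplesBelow n T j, edgeNoise r X p ω
      - ∑ p ∈ samplesBelow n T i, edgeNoise r X p ω < G * T by
    rw [← mul_empiricalPrefixSum_sub hT, ← mul_empiricalPrefixSum_sub hT] at h
    have hT' : (0 : ℝ) < T := by exact_mod_cast hT
    nlinarith
  rcases le_total (i : ℕ) j with hij | hji
  · have := hR (j - i) (by omega)
    rwa [Nat.add_sub_cancel' hij, sum_sdiff_eq_sub (samplesBelow_mono hij)] at this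
  · have := hL (i - j) (by omega)
    rwa [Nat.sub_sub_self hji, sum_neg_distrib, sum_sdiff_eq_sub (samplesBelow_mono hji),
      neg_sub] at this

variable {μ : Measure Ω}

lemma iIndepFun_edgeNoise (hindep : iIndepFun (fun p : Fin n × Fin T ↦ X p.1 p.2) μ) :
    iIndepFun (edgeNoise r X) μ :=
  hindep.comp (fun p x ↦ x - (r p.1.succ - r p.1.castSucc)) fun _ ↦ measurable_id.sub_const _

variable [IsProbabilityMeasure μ]

lemma integral_edgeNoise (hint : ∀ i t, Integrable (X i t) μ)
    (hmean : ∀ i t, ∫ ω, X i t ω ∂μ = r i.succ - r i.castSucc) (p : Fin n × Fin T) :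
    μ[edgeNoise r X p] = 0 := by
  simp [edgeNoise, integral_sub (hint _ _) (integrable_const _), hmean]

lemma hasSubgaussianMGF_edgeNoise (hmeas : ∀ i t, Measurable (X i t))
    (hmean : ∀ i t, ∫ ω, X i t ω ∂μ = r i.succ - r i.castSucc)
    (hbound : ∀ i t, ∀ᵐ ω ∂μ, X i t ω ∈ Set.Icc (-1 : ℝ) 1) (p : Fin n × Fin T) :
    HasSubgaussianMGF (edgeNoise r X p) 1 μ := by
  have h := hasSubgaussianMGF_of_mem_Icc (hmeas p.1 p.2).aemeasurable (hbound p.1 p.2)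
  have h_param : (‖(1 : ℝ) - -1‖₊ / 2) ^ 2 = 1 := by norm_num [← NNReal.coe_inj]
  rwa [hmean, h_param] at h

lemma measureReal_deviation_le_half (hT : 0 < T) (hmeas : ∀ i t, Measurable (X i t))
    (hindep : iIndepFun (fun p : Fin n × Fin T ↦ X p.1 p.2) μ)
    (hint : ∀ i t, Integrable (X i t) μ)
    (hmean : ∀ i t, ∫ ω, X i t ω ∂μ = r i.succ - r i.castSucc)
    (hbound : ∀ i t, ∀ᵐ ω ∂μ, X i t ω ∈ Set.Icc (-1 : ℝ) 1) {G δ : ℝ} (hG : 0 < G)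
    (hδ : 0 < δ) (hδ1 : δ < 1) (hsample : (T : ℝ) ≥ (4 * (n + 1) / G ^ 2) * log (2 / δ))
    (i : Fin (n + 1)) :
    μ.real {ω | ∃ m ≤ n, G * T ≤
        ∑ p ∈ samplesBelow n T (i + m) \ samplesBelow n T i, edgeNoise r X p ω} ≤ δ / 2 ∧
      μ.real {ω | ∃ m ≤ n, G * T ≤
        ∑ p ∈ samplesBelow n T i \ samplesBelow n T (i - m), -edgeNoise r X p ω} ≤ δ / 2 := by
  have hcard : Fintype.card (Fin n × Fin T) ≤ (n + 1) * T := by simp [Nat.mul_le_mul_right]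
  have h_subG := hasSubgaussianMGF_edgeNoise (r := r) hmeas hmean hbound
  exact ⟨measureReal_exists_le_sum_chain_le_half (Y := edgeNoise r X)
      (fun _ ↦ (hmeas _ _).sub_const _)
      (fun _ _ h ↦ sdiff_subset_sdiff (samplesBelow_mono (by omega)) le_rfl)
      (iIndepFun_edgeNoise hindep) (integral_edgeNoise hint hmean) h_subG
      hcard hT hG hδ hδ1 hsample,
    measureReal_exists_le_sum_chain_le_half (Y := fun p ω ↦ -edgeNoise r X p ω)
      (fun _ ↦ ((hmeas _ _).sub_const _).neg)
      (fun _ _ h ↦ sdiff_subset_sdiff le_rfl (samplesBelow_mono (by omega)))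
      ((iIndepFun_edgeNoise hindep).comp (fun _ ↦ Neg.neg) fun _ ↦ measurable_neg)
      (fun p ↦ by rw [integral_neg, integral_edgeNoise hint hmean, neg_zero])
      (fun p ↦ (h_subG p).neg) hcard hT hG hδ hδ1 hsample⟩

end LineGraph

theorem line_graph_PAC_uniform_general
    {Ω : Type*} [MeasureSpace Ω] [IsProbabilityMeasure (ℙ : Measure Ω)]
    (n : ℕ) (r : Fin (n + 1) → ℝ) (rstar u : ℝ)
    (hstar : rstar = Finset.univ.sup' Finset.univ_nonempty r)
    (hbelow : (Finset.univ.filter (fun j => r j < rstar)).Nonempty)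
    (hu : u = (Finset.univ.filter (fun j => r j < rstar)).inf' hbelow
      (fun j => rstar - r j))
    (T : ℕ) (hT : 0 < T)
    (X : Fin n → Fin T → Ω → ℝ)
    (hmeas : ∀ i t, Measurable (X i t))
    (hindep : iIndepFun
      (fun p : Fin n × Fin T => X p.1 p.2) ℙ)
    (hint : ∀ i t, Integrable (X i t) ℙ)
    (hmean : ∀ i t, ∫ ω, X i t ω ∂ℙ = r i.succ - r i.castSucc)
    (hbound : ∀ i t, ∀ᵐ ω ∂ℙ, X i t ω ∈ Set.Icc (-1 : ℝ) 1)
    (ε δ : ℝ) (hε : 0 < ε) (hδ : 0 < δ) (hδ1 : δ < 1)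
    (hsample : (T : ℝ) ≥ (4 * (n + 1) / (max ε u) ^ 2) * Real.log (2 / δ))
    (Shat : Fin (n + 1) → Ω → ℝ)
    (hS : ∀ j ω, Shat j ω =
      ∑ i ∈ Finset.univ.filter (fun i : Fin n => (i : ℕ) < (j : ℕ)),
        (1 / (T : ℝ)) * ∑ t : Fin T, X i t ω)
    (k : Ω → Fin (n + 1)) (hk : ∀ ω j, Shat j ω ≤ Shat (k ω) ω) :
    1 - ENNReal.ofReal δ ≤ ℙ {ω | rstar - ε ≤ r (k ω)} ∧
      ∀ T' : ℝ, T' ≤ (4 * (n + 1) / (max ε u) ^ 2) * Real.log (2 / δ) →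
        (n : ℝ) * T' ≤ (4 * (n + 1) ^ 2 / (max ε u) ^ 2) * Real.log (2 / δ) := by
  have h_log : 0 ≤ log (2 / δ) := log_nonneg (by rw [le_div_iff₀ hδ]; linarith)
  refine ⟨?_, fun T' hT' ↦ natCast_mul_le_of_le_mul h_log hT'⟩
  obtain rfl : Shat = empiricalPrefixSum X := funext fun j ↦ funext (hS j)
  obtain ⟨istar, -, histar⟩ := exists_mem_eq_sup' univ_nonempty r
  have hrstar : rstar = r istar := hstar.trans histar
  obtain ⟨h_right, h_left⟩ := measureReal_deviation_le_half hT hmeas hindep hint hmean hbound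
    (lt_max_of_lt_left hε) hδ hδ1 hsample istar
  refine one_sub_ofReal_le_measure h_right h_left fun ω hω ↦ ?_
  by_contra h_small
  simp only [Set.mem_union, Set.mem_ofPred_eq, not_or, not_exists, not_and, not_le] at h_small
  have h_dev := empiricalPrefixSum_sub_lt hT h_small.1 h_small.2 (k ω)
  refine hω (sub_le_of_sub_lt_max hε.le (fun h ↦ ?_) (by linarith [hk ω istar]))
  rw [hu]
  exact inf'_le _ (by simpa using h)

/-- PAC guarantee for the line graph with `n + 1` nodes (hence `n` edges), each
edge sampled the same number `T` of times. If `T ≥ (4(n+1)/ε̃²)·log(2/δ)` with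
`ε̃ = max ε u`, the node maximizing the empirical prefix sums is `ε`-optimal with
probability at least `1 − δ`; consequently, the total number of edge pulls
`n·T` is at most `(4(n+1)²/ε̃²)·log(2/δ)` whenever `T` is taken at (or below)
the threshold. -/
theorem line_graph_PAC_uniform
    {Ω : Type*} [MeasureSpace Ω] [IsProbabilityMeasure (ℙ : Measure Ω)]
    (n : ℕ) (hn : 1 ≤ n) (r : Fin (n + 1) → ℝ) (rstar u : ℝ)
    (hstar : rstar = Finset.univ.sup' Finset.univ_nonempty r)
    (hbelow : (Finset.univ.filter (fun j => r j < rstar)).Nonempty)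
    (hu : u = (Finset.univ.filter (fun j => r j < rstar)).inf' hbelow
      (fun j => rstar - r j))
    (T : ℕ) (hT : 0 < T)
    (X : Fin n → Fin T → Ω → ℝ)
    (hmeas : ∀ i t, Measurable (X i t))
    (hindep : iIndepFun
      (fun p : Fin n × Fin T => X p.1 p.2) ℙ)
    (hint : ∀ i t, Integrable (X i t) ℙ)
    (hmean : ∀ i t, ∫ ω, X i t ω ∂ℙ = r i.succ - r i.castSucc)
    (hbound : ∀ i t, ∀ᵐ ω ∂ℙ, X i t ω ∈ Set.Icc (-1 : ℝ) 1)
    (ε δ : ℝ) (hε : 0 < ε) (hδ : 0 < δ) (hδ1 : δ < 1)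
    (hsample : (T : ℝ) ≥ (4 * (n + 1) / (max ε u) ^ 2) * Real.log (2 / δ))
    (Shat : Fin (n + 1) → Ω → ℝ)
    (hS : ∀ j ω, Shat j ω =
      ∑ i ∈ Finset.univ.filter (fun i : Fin n => (i : ℕ) < (j : ℕ)),
        (1 / (T : ℝ)) * ∑ t : Fin T, X i t ω)
    (k : Ω → Fin (n + 1)) (hk : ∀ ω j, Shat j ω ≤ Shat (k ω) ω) :
    1 - ENNReal.ofReal δ ≤ ℙ {ω | rstar - ε ≤ r (k ω)} ∧
      ∀ T' : ℝ, T' ≤ (4 * (n + 1) / (max ε u) ^ 2) * Real.log (2 / δ) →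
        (n : ℝ) * T' ≤ (4 * (n + 1) ^ 2 / (max ε u) ^ 2) * Real.log (2 / δ) :=
  line_graph_PAC_uniform_general n r rstar u hstar hbelow hu T hT X hmeas hindep hint hmean hbound ε
    δ hε hδ hδ1 hsample Shat hS k hk
end

section
/- Consider the line graph setup with n nodes and edge samples bounded in [−1,1] almost surely, with per-edge sample sizes T^1, …, T^{n−1}. Then for every ε > 0, P( ∃ i ∈ {1,…,n} : | Ŝ_i − (r_i − r_1) | > ε ) ≤ 2·exp( − ε² / Σ_{k=1}^{n−1} (4 / T^k) ). -/
/-!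
Write `Ŝ_j - (r_j - r_1)` as the partial sum, over the samples of the first `j - 1` edges, of
the centred samples scaled by `1 / Tᵏ`. By Hoeffding's lemma each of them is sub-Gaussian with
variance proxy `1 / (Tᵏ)²`, and these proxies add up to `∑ₖ 1 / Tᵏ`. For `t > 0` the exponentials
`exp (t · partial sum)` form a nonnegative submartingale (the increments are independent with
mgf `≥ 1`), so Doob's maximal inequality bounds the probability that some partial sum reaches `ε`
by the Chernoff bound `exp (-ε² / (2 ∑ₖ 1 / Tᵏ))` for the full sum. Applying this to the negated
samples as well gives the two-sided bound.
-/

open MeasureTheory ProbabilityTheory Real Finset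
open scoped NNReal

namespace ProbabilityTheory

variable {Ω : Type*} {mΩ : MeasurableSpace Ω} {μ : Measure Ω} [IsProbabilityMeasure μ]

lemma HasSubgaussianMGF.integral_eq_zero {X : Ω → ℝ} {c : ℝ≥0}
    (h : HasSubgaussianMGF X c μ) : μ[X] = 0 := by
  have hmgf : HasDerivAt (mgf X μ) μ[X] 0 := by
    simpa using hasDerivAt_mgf (t := 0) (by simp [h.integrableExpSet_eq_univ])
  have hbound : HasDerivAt (fun t : ℝ => exp (c * t ^ 2 / 2)) 0 0 := by
    simpa using (((hasDerivAt_pow 2 (0 : ℝ)).const_mul (c : ℝ)).div_const 2).exp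
  have hmin : IsLocalMin (fun t => exp (c * t ^ 2 / 2) - mgf X μ t) 0 :=
    Filter.Eventually.of_forall fun t => by simpa using h.mgf_le t
  simpa using hmin.hasDerivAt_eq_zero (hbound.sub hmgf)

lemma HasSubgaussianMGF.one_le_mgf {X : Ω → ℝ} {c : ℝ≥0}
    (h : HasSubgaussianMGF X c μ) (t : ℝ) : 1 ≤ mgf X μ t := by
  have hX := h.integrable
  calc (1 : ℝ) = ∫ ω, (t * X ω + 1) ∂μ := by
        rw [integral_add (hX.const_mul t) (integrable_const 1), integral_const_mul,
          h.integral_eq_zero]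
        simp
    _ ≤ mgf X μ t :=
        integral_mono ((hX.const_mul t).add (integrable_const 1)) (h.integrable_exp_mul t)
          fun ω => add_one_le_exp _

lemma hasSubgaussianMGF_const_mul_sub_integral {X : Ω → ℝ} (hX : AEMeasurable X μ)
    (hb : ∀ᵐ ω ∂μ, X ω ∈ Set.Icc (-1 : ℝ) 1) (a : ℝ≥0) :
    HasSubgaussianMGF (fun ω => a * (X ω - μ[X])) (a ^ 2) μ := by
  convert (hasSubgaussianMGF_of_mem_Icc hX hb).const_mul a using 1
  rw [show (‖(1 : ℝ) - -1‖₊ / 2) ^ 2 = 1 by norm_num]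
  exact (mul_one _).symm

variable {ι : Type*}

def prefixFiltration (Y : ι → Ω → ℝ) (hY : ∀ i, Measurable (Y i)) (s : ℕ → Finset ι)
    (hs : Monotone s) : Filtration ℕ mΩ where
  seq k := ⨆ i ∈ (s k : Set ι), MeasurableSpace.comap (Y i) inferInstance
  mono' _ _ hkl := biSup_mono fun _ hi => hs hkl hi
  le' _ := iSup₂_le fun i _ => (hY i).comap_le

lemma measurable_sum_iSup_comap {Y : ι → Ω → ℝ} {S : Set ι} {t : Finset ι}
    (ht : ∀ i ∈ t, i ∈ S) :
    Measurable[⨆ i ∈ S, MeasurableSpace.comap (Y i) inferInstance] fun ω => ∑ i ∈ t, Y i ω :=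
  Finset.measurable_fun_sum _ fun i hi => Measurable.of_comap_le
    (le_iSup₂ (f := fun i (_ : i ∈ S) => MeasurableSpace.comap (Y i) inferInstance) i (ht i hi))

lemma submartingale_exp_mul_sum {Y : ι → Ω → ℝ} (hindep : iIndepFun Y μ)
    (hY : ∀ i, Measurable (Y i)) {c : ι → ℝ≥0} (hsub : ∀ i, HasSubgaussianMGF (Y i) (c i) μ)
    {s : ℕ → Finset ι} (hs : Monotone s) (t : ℝ) :
    Submartingale (fun k ω => exp (t * ∑ i ∈ s k, Y i ω)) (prefixFiltration Y hY s hs) μ := by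
  classical
  have hadapted (k : ℕ) :
      Measurable[prefixFiltration Y hY s hs k] fun ω => exp (t * ∑ i ∈ s k, Y i ω) :=
    ((measurable_sum_iSup_comap (Y := Y) (S := s k) fun _ => mem_coe.2).const_mul t).exp
  have hint (k : ℕ) : Integrable (fun ω => exp (t * ∑ i ∈ s k, Y i ω)) μ :=
    (HasSubgaussianMGF.sum_of_iIndepFun hindep fun i _ => hsub i).integrable_exp_mul t
  refine submartingale_of_setIntegral_le_succ (fun k => (hadapted k).stronglyMeasurable) hint
    fun k A hA => ?_
  set R : Ω → ℝ := fun ω => ∑ i ∈ s (k + 1) \ s k, Y i ω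
  have hA' : MeasurableSet A := (prefixFiltration Y hY s hs).le k A hA
  have hsplit : ∀ ω, exp (t * ∑ i ∈ s (k + 1), Y i ω) =
      exp (t * ∑ i ∈ s k, Y i ω) * exp (t * R ω) := fun ω => by
    rw [← sum_sdiff (hs k.le_succ), ← exp_add, mul_add, add_comm]
  have hindep_step : IndepFun (A.indicator fun ω => exp (t * ∑ i ∈ s k, Y i ω))
      (fun ω => exp (t * R ω)) μ := by
    rw [IndepFun_iff_Indep]
    refine indep_of_indep_of_le
      (indep_iSup_of_disjoint (fun i => (hY i).comap_le) hindep.iIndep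
        (S := s k) (T := s (k + 1) \ s k) Set.disjoint_sdiff_right)
      ?_ ?_
    · exact ((hadapted k).indicator hA).comap_le
    · exact ((measurable_sum_iSup_comap (Y := Y) (S := (s (k + 1) : Set ι) \ s k)
        fun i hi => by simpa using hi).const_mul t).exp.comap_le
  have hR : HasSubgaussianMGF R (∑ i ∈ s (k + 1) \ s k, c i) μ :=
    HasSubgaussianMGF.sum_of_iIndepFun hindep fun i _ => hsub i
  calc ∫ ω in A, exp (t * ∑ i ∈ s k, Y i ω) ∂μ
      ≤ (∫ ω in A, exp (t * ∑ i ∈ s k, Y i ω) ∂μ) * mgf R μ t :=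
        le_mul_of_one_le_right (setIntegral_nonneg hA' fun _ _ => (exp_pos _).le)
          (hR.one_le_mgf t)
    _ = ∫ ω in A, exp (t * ∑ i ∈ s (k + 1), Y i ω) ∂μ := by
        simp_rw [hsplit, ← integral_indicator hA', Set.indicator_mul_left, mgf]
        exact (hindep_step.integral_fun_mul_eq_mul_integral
          ((hint k).indicator hA').aestronglyMeasurable
          (hR.integrable_exp_mul t).aestronglyMeasurable).symm

lemma mul_measureReal_exists_ge_le_mgf {S : ℕ → Ω → ℝ} {ℱ : Filtration ℕ mΩ} {t : ℝ}
    (hsub : Submartingale (fun k ω => exp (t * S k ω)) ℱ μ) (ht : 0 < t) (N : ℕ) (ε : ℝ) :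
    exp (t * ε) * μ.real {ω | ∃ k ≤ N, ε ≤ S k ω} ≤ mgf (S N) μ t := by
  set E := {ω | exp (t * ε) ≤
    (range (N + 1)).sup' nonempty_range_add_one fun k => exp (t * S k ω)}
  have hsubset : {ω | ∃ k ≤ N, ε ≤ S k ω} ⊆ E := fun ω ⟨k, hkN, hk⟩ =>
    (exp_le_exp.2 (mul_le_mul_of_nonneg_left hk ht.le)).trans
      (le_sup' (fun k => exp (t * S k ω)) (mem_range_succ_iff.2 hkN))
  have hdoob := maximal_ineq hsub (fun _ _ => (exp_pos _).le)
    (ε := ⟨exp (t * ε), (exp_pos _).le⟩) N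
  have hdoob' : exp (t * ε) * μ.real E ≤ ∫ ω in E, exp (t * S N ω) ∂μ := by
    have := ENNReal.toReal_mono ENNReal.ofReal_ne_top hdoob
    rwa [ENNReal.toReal_mul, ENNReal.toReal_ofReal
      (setIntegral_nonneg_of_ae (Filter.Eventually.of_forall fun _ => (exp_pos _).le))] at this
  calc exp (t * ε) * μ.real {ω | ∃ k ≤ N, ε ≤ S k ω} ≤ exp (t * ε) * μ.real E :=
        mul_le_mul_of_nonneg_left (measureReal_mono hsubset) (exp_pos _).le
    _ ≤ ∫ ω in E, exp (t * S N ω) ∂μ := hdoob'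
    _ ≤ mgf (S N) μ t :=
        setIntegral_le_integral (hsub.integrable N)
          (Filter.Eventually.of_forall fun _ => (exp_pos _).le)

theorem measureReal_exists_sum_ge_le_of_iIndepFun {Y : ι → Ω → ℝ} (hindep : iIndepFun Y μ)
    (hY : ∀ i, Measurable (Y i)) {c : ι → ℝ≥0} (hsub : ∀ i, HasSubgaussianMGF (Y i) (c i) μ)
    {s : ℕ → Finset ι} (hs : Monotone s) (N : ℕ) {ε : ℝ} (hε : 0 < ε) :
    μ.real {ω | ∃ k ≤ N, ε ≤ ∑ i ∈ s k, Y i ω} ≤ exp (-ε ^ 2 / (2 * ∑ i ∈ s N, c i)) := by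
  rcases (∑ i ∈ s N, c i).coe_nonneg.eq_or_lt with hC | hC
  · simp [← hC] -- `exp (-ε ^ 2 / 0) = 1`
  have hSN := HasSubgaussianMGF.sum_of_iIndepFun hindep (s := s N) fun i _ => hsub i
  have hbound := (mul_measureReal_exists_ge_le_mgf
    (submartingale_exp_mul_sum hindep hY hsub hs (ε / ↑(∑ i ∈ s N, c i))) (div_pos hε hC) N
    ε).trans (hSN.mgf_le _)
  rw [← le_div_iff₀' (exp_pos _), ← exp_sub] at hbound
  refine hbound.trans_eq (congrArg exp ?_)
  generalize ((∑ i ∈ s N, c i : ℝ≥0) : ℝ) = C at hC ⊢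
  field_simp
  ring

theorem measureReal_exists_abs_sum_ge_le_of_iIndepFun {Y : ι → Ω → ℝ} (hindep : iIndepFun Y μ)
    (hY : ∀ i, Measurable (Y i)) {c : ι → ℝ≥0} (hsub : ∀ i, HasSubgaussianMGF (Y i) (c i) μ)
    {s : ℕ → Finset ι} (hs : Monotone s) (N : ℕ) {ε : ℝ} (hε : 0 < ε) :
    μ.real {ω | ∃ k ≤ N, ε ≤ |∑ i ∈ s k, Y i ω|} ≤
      2 * exp (-ε ^ 2 / (2 * ∑ i ∈ s N, c i)) := by
  have hneg := measureReal_exists_sum_ge_le_of_iIndepFun (Y := fun i ω => -Y i ω)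
    (hindep.comp (fun _ x => -x) fun _ => measurable_neg) (fun i => (hY i).neg)
    (fun i => (hsub i).neg) hs N hε
  simp only [sum_neg_distrib] at hneg
  calc μ.real {ω | ∃ k ≤ N, ε ≤ |∑ i ∈ s k, Y i ω|}
      ≤ μ.real ({ω | ∃ k ≤ N, ε ≤ ∑ i ∈ s k, Y i ω} ∪
          {ω | ∃ k ≤ N, ε ≤ -∑ i ∈ s k, Y i ω}) :=
        measureReal_mono fun ω ⟨k, hkN, hk⟩ => (le_abs'.1 hk).symm.imp
          (fun h => ⟨k, hkN, h⟩) fun h => ⟨k, hkN, le_neg.1 h⟩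
    _ ≤ _ := (measureReal_union_le _ _).trans
        (by linarith [measureReal_exists_sum_ge_le_of_iIndepFun hindep hY hsub hs N hε])

end ProbabilityTheory

lemma Fin.sum_filter_lt_succ_sub_castSucc {M : Type*} [AddCommGroup M] {n : ℕ}
    (r : Fin (n + 1) → M) (j : Fin (n + 1)) :
    ∑ i ∈ univ.filter (fun i : Fin n => (i : ℕ) < j), (r i.succ - r i.castSucc) = r j - r 0 := by
  induction j using Fin.induction with
  | zero => simp
  | succ k ih =>
    have hinsert : univ.filter (fun i : Fin n => (i : ℕ) < k.succ) =
        insert k (univ.filter fun i : Fin n => (i : ℕ) < k.castSucc) := by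
      ext i
      simp [le_iff_eq_or_lt, Fin.ext_iff]
    rw [hinsert, sum_insert (by simp), ih]
    abel

namespace LineGraph

variable {Ω : Type*} {n : ℕ} {T : Fin n → ℕ}

def prefixSamples (T : Fin n → ℕ) (j : ℕ) : Finset (Σ i : Fin n, Fin (T i)) :=
  (univ.filter fun i : Fin n => (i : ℕ) < j).sigma fun _ => univ

lemma monotone_prefixSamples (T : Fin n → ℕ) : Monotone (prefixSamples T) := fun _ _ hjk =>
  sigma_mono (monotone_filter_right _ fun _ _ hi => hi.trans_le hjk) fun _ => le_rfl

lemma prefixSamples_eq_univ (T : Fin n → ℕ) : prefixSamples T n = univ :=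
  eq_univ_of_forall fun p => by simp [prefixSamples]

-- The weight `1 / Tⁱ` is taken in `ℝ≥0`, where the variance proxy `(1 / Tⁱ) ^ 2` lives.
noncomputable def centeredSample (r : Fin (n + 1) → ℝ) (X : ∀ i : Fin n, Fin (T i) → Ω → ℝ)
    (p : Σ i : Fin n, Fin (T i)) (ω : Ω) : ℝ :=
  ((T p.1 : ℝ≥0)⁻¹ : ℝ≥0) * (X p.1 p.2 ω - (r p.1.succ - r p.1.castSucc))

lemma sum_prefixSamples_centeredSample (hT : ∀ i, 0 < T i) (r : Fin (n + 1) → ℝ)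
    (X : ∀ i : Fin n, Fin (T i) → Ω → ℝ) (j : Fin (n + 1)) (ω : Ω) :
    ∑ p ∈ prefixSamples T j, centeredSample r X p ω =
      ∑ i ∈ univ.filter (fun i : Fin n => (i : ℕ) < j), (1 / (T i : ℝ)) * ∑ t, X i t ω -
        (r j - r 0) := by
  rw [prefixSamples, sum_sigma, ← Fin.sum_filter_lt_succ_sub_castSucc r j, ← sum_sub_distrib]
  refine sum_congr rfl fun i _ => ?_
  have hTi : (T i : ℝ) ≠ 0 := by exact_mod_cast (hT i).ne'
  simp only [centeredSample, NNReal.coe_inv, NNReal.coe_natCast, ← mul_sum, sum_sub_distrib,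
    sum_const, card_univ, Fintype.card_fin, nsmul_eq_mul]
  field_simp

lemma coe_sum_prefixSamples_inv_sq (T : Fin n → ℕ) :
    ((∑ p ∈ prefixSamples T n, (T p.1 : ℝ≥0)⁻¹ ^ 2 : ℝ≥0) : ℝ) = ∑ k, (T k : ℝ)⁻¹ := by
  rw [prefixSamples_eq_univ, NNReal.coe_sum, Fintype.sum_sigma]
  refine sum_congr rfl fun i _ => ?_
  simpa [sq, mul_comm] using mul_self_mul_inv (T i : ℝ)⁻¹

variable [MeasureSpace Ω]

lemma iIndepFun_centeredSample {r : Fin (n + 1) → ℝ} {X : ∀ i : Fin n, Fin (T i) → Ω → ℝ}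
    (hindep : iIndepFun (fun p : Σ i : Fin n, Fin (T i) => X p.1 p.2) ℙ) :
    iIndepFun (centeredSample r X) ℙ :=
  hindep.comp (fun p x => ((T p.1 : ℝ≥0)⁻¹ : ℝ≥0) * (x - (r p.1.succ - r p.1.castSucc)))
    fun _ => by fun_prop

variable [IsProbabilityMeasure (ℙ : Measure Ω)]

lemma hasSubgaussianMGF_centeredSample {r : Fin (n + 1) → ℝ}
    {X : ∀ i : Fin n, Fin (T i) → Ω → ℝ} (hmeas : ∀ i t, Measurable (X i t))
    (hmean : ∀ i t, ∫ ω, X i t ω ∂ℙ = r i.succ - r i.castSucc)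
    (hbound : ∀ i t, ∀ᵐ ω ∂ℙ, X i t ω ∈ Set.Icc (-1 : ℝ) 1) (p : Σ i : Fin n, Fin (T i)) :
    HasSubgaussianMGF (centeredSample r X p) ((T p.1 : ℝ≥0)⁻¹ ^ 2) ℙ := by
  have h := hasSubgaussianMGF_const_mul_sub_integral
    (hmeas p.1 p.2).aemeasurable (hbound p.1 p.2) (T p.1 : ℝ≥0)⁻¹
  rwa [hmean] at h

end LineGraph

open LineGraph

theorem line_graph_deviation_general
    {Ω : Type*} [MeasureSpace Ω] [IsProbabilityMeasure (ℙ : Measure Ω)]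
    (n : ℕ) (r : Fin (n + 1) → ℝ)
    (T : Fin n → ℕ) (hT : ∀ i, 0 < T i)
    (X : ∀ i : Fin n, Fin (T i) → Ω → ℝ)
    (hmeas : ∀ i t, Measurable (X i t))
    (hindep : iIndepFun
      (fun p : Σ i : Fin n, Fin (T i) => X p.1 p.2) ℙ)
    (hmean : ∀ i t, ∫ ω, X i t ω ∂ℙ = r i.succ - r i.castSucc)
    (hbound : ∀ i t, ∀ᵐ ω ∂ℙ, X i t ω ∈ Set.Icc (-1 : ℝ) 1)
    (Shat : Fin (n + 1) → Ω → ℝ)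
    (hS : ∀ j ω, Shat j ω =
      ∑ i ∈ Finset.univ.filter (fun i : Fin n => (i : ℕ) < (j : ℕ)),
        (1 / (T i : ℝ)) * ∑ t : Fin (T i), X i t ω)
    (ε : ℝ) (hε : 0 < ε) :
    ℙ {ω | ∃ j : Fin (n + 1), ε < |Shat j ω - (r j - r 0)|} ≤
      ENNReal.ofReal (2 * Real.exp (-(ε ^ 2) / ∑ k : Fin n, 4 / (T k : ℝ))) := by
  have hmax := measureReal_exists_abs_sum_ge_le_of_iIndepFun (iIndepFun_centeredSample hindep)
    (fun p => by fun_prop [centeredSample]) (hasSubgaussianMGF_centeredSample hmeas hmean hbound)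
    (monotone_prefixSamples T) n hε
  rw [coe_sum_prefixSamples_inv_sq] at hmax
  have hexponent :
      -ε ^ 2 / (2 * ∑ k, (T k : ℝ)⁻¹) ≤ -(ε ^ 2) / ∑ k : Fin n, 4 / (T k : ℝ) := by
    rw [show ∑ k : Fin n, 4 / (T k : ℝ) = 4 * ∑ k, (T k : ℝ)⁻¹ by
        simp [div_eq_mul_inv, mul_sum],
      show -ε ^ 2 / (2 * ∑ k, (T k : ℝ)⁻¹) = -(2 * ε ^ 2) / (4 * ∑ k, (T k : ℝ)⁻¹) by ring]
    exact div_le_div_of_nonneg_right (by linarith [sq_nonneg ε]) (by positivity)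
  calc ℙ {ω | ∃ j : Fin (n + 1), ε < |Shat j ω - (r j - r 0)|}
      ≤ ℙ {ω | ∃ k ≤ n, ε ≤ |∑ p ∈ prefixSamples T k, centeredSample r X p ω|} :=
        measure_mono fun ω ⟨j, hj⟩ =>
          ⟨j, j.is_le, by rw [sum_prefixSamples_centeredSample hT, ← hS]; exact hj.le⟩
    _ = ENNReal.ofReal (Measure.real ℙ
          {ω | ∃ k ≤ n, ε ≤ |∑ p ∈ prefixSamples T k, centeredSample r X p ω|}) :=
        (ofReal_measureReal).symm
    _ ≤ _ := ENNReal.ofReal_le_ofReal (hmax.trans (by gcongr))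

/-- Uniform deviation bound for the empirical prefix sums in the line graph setup
with `n + 1` nodes `0, …, n` and per-edge sample sizes `T i`:
`P(∃ j, |Ŝ j − (r j − r 0)| > ε) ≤ 2·exp(−ε² / ∑_k 4/T k)`. -/
theorem line_graph_deviation
    {Ω : Type*} [MeasureSpace Ω] [IsProbabilityMeasure (ℙ : Measure Ω)]
    (n : ℕ) (r : Fin (n + 1) → ℝ)
    (T : Fin n → ℕ) (hT : ∀ i, 0 < T i)
    (X : ∀ i : Fin n, Fin (T i) → Ω → ℝ)
    (hmeas : ∀ i t, Measurable (X i t))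
    (hindep : iIndepFun
      (fun p : Σ i : Fin n, Fin (T i) => X p.1 p.2) ℙ)
    (hint : ∀ i t, Integrable (X i t) ℙ)
    (hmean : ∀ i t, ∫ ω, X i t ω ∂ℙ = r i.succ - r i.castSucc)
    (hbound : ∀ i t, ∀ᵐ ω ∂ℙ, X i t ω ∈ Set.Icc (-1 : ℝ) 1)
    (Shat : Fin (n + 1) → Ω → ℝ)
    (hS : ∀ j ω, Shat j ω =
      ∑ i ∈ Finset.univ.filter (fun i : Fin n => (i : ℕ) < (j : ℕ)),
        (1 / (T i : ℝ)) * ∑ t : Fin (T i), X i t ω)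
    (ε : ℝ) (hε : 0 < ε) :
    ℙ {ω | ∃ j : Fin (n + 1), ε < |Shat j ω - (r j - r 0)|} ≤
      ENNReal.ofReal (2 * Real.exp (-(ε ^ 2) / ∑ k : Fin n, 4 / (T k : ℝ))) :=
  line_graph_deviation_general n r T hT X hmeas hindep hmean hbound Shat hS ε hε
end
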